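/- Let (M_b, ∼_€) and (M_b, ∼_$) be arbitrage-free markets of deterministic cash flows with NA price functionals π_€ and π_$ respectively, and let EURUSD₀ > 0 be given. Then there exists exactly one arbitrage-free combined market (M_b ⊕ M_b, ∼) such that (γ1, o) ∼ (γ2, o) if and only if γ1 ∼_€ γ2, (o, γ1) ∼ (o, γ2) if and only if γ1 ∼_$ γ2, and (δ0, o) ∼ EURUSD₀·(o, δ0). In this combined market, with USDEUR₀ = 1/EURUSD₀, the uniquely determined 1-price of (γ_€, γ_$) ∈ M_b ⊕ M_b is π_€(γ_€) + USDEUR₀·π_$(γ_$), and the uniquely determined 2-price is EURUSD₀·π_€(γ_€) + π_$(γ_$). -/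

import Mathlib

open MeasureTheory
open scoped NNReal

/-- The unit zero-coupon bond with maturity `t`: the Dirac measure at `t`,
as a finite signed Borel measure on `[0,∞)` (modeled as `ℝ≥0`). -/
noncomputable def uzcb (t : ℝ≥0) : SignedMeasure ℝ≥0 :=
  (MeasureTheory.Measure.dirac t).toSignedMeasure

/-- A combined market: a reflexive, symmetric, additive relation on the direct sum
M_b ⊕ M_b such that every nonzero pair of nonnegative cash flows has at least one
strictly positive 1-price. -/
def IsCombinedMarket
    (R : SignedMeasure ℝ≥0 × SignedMeasure ℝ≥0 →
         SignedMeasure ℝ≥0 × SignedMeasure ℝ≥0 → Prop) : Prop :=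
  (∀ p, R p p) ∧
  (∀ p q, R p q → R q p) ∧
  (∀ p₁ p₂ q₁ q₂, R p₁ p₂ → R q₁ q₂ → R (p₁ + q₁) (p₂ + q₂)) ∧
  (∀ p : SignedMeasure ℝ≥0 × SignedMeasure ℝ≥0, 0 ≤ p.1 → 0 ≤ p.2 → p ≠ 0 →
    ∃ b : ℝ, 0 < b ∧ R p (b • ((uzcb 0, 0) : SignedMeasure ℝ≥0 × SignedMeasure ℝ≥0)))

/-- No-arbitrage for a combined market. -/
def NoArbC
    (R : SignedMeasure ℝ≥0 × SignedMeasure ℝ≥0 →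
         SignedMeasure ℝ≥0 × SignedMeasure ℝ≥0 → Prop) : Prop :=
  ¬ ∃ p : SignedMeasure ℝ≥0 × SignedMeasure ℝ≥0, 0 ≤ p.1 ∧ 0 ≤ p.2 ∧ p ≠ 0 ∧ R 0 p

/-- A market of deterministic cash flows in a single currency. -/
def IsMarket (r : SignedMeasure ℝ≥0 → SignedMeasure ℝ≥0 → Prop) : Prop :=
  (∀ γ, r γ γ) ∧
  (∀ γ₁ γ₂, r γ₁ γ₂ → r γ₂ γ₁) ∧
  (∀ γ₁ γ₂ γ₃ γ₄, r γ₁ γ₂ → r γ₃ γ₄ → r (γ₁ + γ₃) (γ₂ + γ₄)) ∧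
  (∀ γ : SignedMeasure ℝ≥0, 0 ≤ γ → γ ≠ 0 → ∃ b : ℝ, 0 < b ∧ r γ (b • uzcb 0))

/-- No-arbitrage for a single-currency market. -/
def NoArb (r : SignedMeasure ℝ≥0 → SignedMeasure ℝ≥0 → Prop) : Prop :=
  ¬ ∃ γ : SignedMeasure ℝ≥0, 0 ≤ γ ∧ γ ≠ 0 ∧ r 0 γ

/-!
Reflexivity, symmetry and additivity make a market relation the coset relation of the subgroup
of cash flows equivalent to `o`. In a combined market this subgroup meets the cash pairs
`(a • δ₀, b • δ₀)` in a subgroup of `ℝ²` that contains the FX trade `(-1, E)` and misses the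
nonnegative quadrant; an Archimedean argument puts it on the line `E * a + b = 0`, and the
1-prices of the pairs `(o, t • δ₀)` fill that line. Together with the single-currency price
functionals this shows that any admissible combined market relates `p` and `q` exactly when
`E * π_€ p.1 + π_$ p.2` agrees on them, which gives existence, uniqueness and both prices.
-/

section AddCongr

variable {A : Type*} [AddCommGroup A] {R : A → A → Prop} {p q p' q' s : A}

structure IsAddCongr (R : A → A → Prop) : Prop where
  refl : ∀ p, R p p
  symm : ∀ {p q}, R p q → R q p
  add : ∀ {p₁ p₂ q₁ q₂}, R p₁ p₂ → R q₁ q₂ → R (p₁ + q₁) (p₂ + q₂)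

namespace IsAddCongr

def ker (hR : IsAddCongr R) : AddSubgroup A where
  carrier := {p | R 0 p}
  zero_mem' := hR.refl 0
  add_mem' ha hb := by simpa using hR.add ha hb
  neg_mem' {p} hp := hR.symm (by simpa using hR.add hp (hR.refl (-p)))

theorem mem_ker (hR : IsAddCongr R) : p ∈ hR.ker ↔ R 0 p := Iff.rfl

theorem rel_iff_sub_mem_ker (hR : IsAddCongr R) : R p q ↔ q - p ∈ hR.ker :=
  ⟨fun h => hR.mem_ker.2 (by simpa [sub_eq_add_neg] using hR.add h (hR.refl (-p))),
    fun h => by simpa using hR.add (hR.mem_ker.1 h) (hR.refl p)⟩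

theorem trans (hR : IsAddCongr R) (hpq : R p q) (hqs : R q s) : R p s :=
  hR.rel_iff_sub_mem_ker.2 <| by
    simpa using add_mem (hR.rel_iff_sub_mem_ker.1 hqs) (hR.rel_iff_sub_mem_ker.1 hpq)

theorem rel_congr (hR : IsAddCongr R) (hp : R p p') (hq : R q q') : R p q ↔ R p' q' :=
  ⟨fun h => hR.trans (hR.trans (hR.symm hp) h) hq,
    fun h => hR.trans (hR.trans hp h) (hR.symm hq)⟩

end IsAddCongr

end AddCongr

theorem AddSubgroup.exists_nonneg_ne_zero_mem {G : AddSubgroup (ℝ × ℝ)} {E : ℝ} (hE : 0 < E)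
    (hFX : ((-1 : ℝ), E) ∈ G) {v : ℝ × ℝ} (hv : v ∈ G) (hs : 0 < E * v.1 + v.2) :
    ∃ w ∈ G, 0 ≤ w ∧ w ≠ 0 := by
  -- `n • v + ⌊n * v.1⌋ • (-1, E)` is nonnegative as soon as `E ≤ n * (E * v.1 + v.2)`.
  obtain ⟨n, hn⟩ := exists_nat_ge (E / (E * v.1 + v.2))
  rw [div_le_iff₀ hs] at hn
  set m := ⌊n * v.1⌋
  have hw : ((n * v.1 - m, n * v.2 + m * E) : ℝ × ℝ) ∈ G := by
    convert add_mem (nsmul_mem hv n) (zsmul_mem hFX m) using 1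
    ext <;> simp; ring
  have hw₁ : 0 ≤ n * v.1 - m := sub_nonneg.2 (Int.floor_le _)
  have hw₂ : 0 < n * v.2 + m * E := by
    nlinarith [mul_lt_mul_of_pos_right (Int.lt_floor_add_one (n * v.1)) hE]
  exact ⟨_, hw, Prod.le_def.2 ⟨hw₁, hw₂.le⟩, fun h => hw₂.ne' (congrArg Prod.snd h)⟩

theorem AddSubgroup.mul_fst_add_snd_eq_zero {G : AddSubgroup (ℝ × ℝ)} {E : ℝ} (hE : 0 < E)
    (hFX : ((-1 : ℝ), E) ∈ G) (hG : ∀ w ∈ G, 0 ≤ w → w = 0) {v : ℝ × ℝ} (hv : v ∈ G) :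
    E * v.1 + v.2 = 0 := by
  have not_pos : ∀ u ∈ G, ¬ 0 < E * u.1 + u.2 := fun u hu hs => by
    obtain ⟨w, hw, hw₀, hw_ne⟩ := exists_nonneg_ne_zero_mem hE hFX hu hs
    exact hw_ne (hG w hw hw₀)
  have h_neg := not_pos (-v) (neg_mem hv)
  have h_pos := not_pos v hv
  simp only [Prod.fst_neg, Prod.snd_neg] at h_neg
  linarith

theorem IsMarket.isAddCongr {r : SignedMeasure ℝ≥0 → SignedMeasure ℝ≥0 → Prop}
    (hM : IsMarket r) : IsAddCongr r :=
  ⟨hM.1, hM.2.1 _ _, hM.2.2.1 _ _ _ _⟩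

theorem IsCombinedMarket.isAddCongr
    {R : SignedMeasure ℝ≥0 × SignedMeasure ℝ≥0 → SignedMeasure ℝ≥0 × SignedMeasure ℝ≥0 → Prop}
    (hC : IsCombinedMarket R) : IsAddCongr R :=
  ⟨hC.1, hC.2.1 _ _, hC.2.2.1 _ _ _ _⟩

theorem uzcb_ne_zero (t : ℝ≥0) : uzcb t ≠ 0 := by
  intro h
  have := congrArg (fun μ : SignedMeasure ℝ≥0 => μ {t}) h
  simp [uzcb, Measure.toSignedMeasure_apply_measurable (measurableSet_singleton t),
    Measure.real] at this

theorem smul_uzcb_nonneg {c : ℝ} (hc : 0 ≤ c) (t : ℝ≥0) : 0 ≤ c • uzcb t := by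
  rw [VectorMeasure.le_iff']
  intro i
  exact mul_nonneg hc (VectorMeasure.le_iff'.1 (Measure.zero_le_toSignedMeasure _) i)

theorem smul_uzcb_eq_zero_iff {c : ℝ} {t : ℝ≥0} : c • uzcb t = 0 ↔ c = 0 := by
  simp [uzcb_ne_zero]

theorem NoArb.eq_zero_of_rel_smul_uzcb {r : SignedMeasure ℝ≥0 → SignedMeasure ℝ≥0 → Prop}
    (hNA : NoArb r) (hM : IsMarket r) {c : ℝ} (h : r 0 (c • uzcb 0)) : c = 0 := by
  by_contra hc
  rcases lt_or_gt_of_ne hc with hneg | hpos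
  · have hmem : (-c) • uzcb 0 ∈ hM.isAddCongr.ker := by
      rw [show (-c) • uzcb 0 = -(c • uzcb 0) by module]
      exact neg_mem (hM.isAddCongr.mem_ker.2 h)
    exact hNA ⟨_, smul_uzcb_nonneg (by linarith) 0, smul_uzcb_eq_zero_iff.not.2 (neg_ne_zero.2 hc),
      hmem⟩
  · exact hNA ⟨_, smul_uzcb_nonneg hpos.le 0, smul_uzcb_eq_zero_iff.not.2 hc, h⟩

structure IsNAPrice (r : SignedMeasure ℝ≥0 → SignedMeasure ℝ≥0 → Prop)
    (π : SignedMeasure ℝ≥0 → ℝ) : Prop where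
  isMarket : IsMarket r
  noArb : NoArb r
  rel_price : ∀ γ, r γ (π γ • uzcb 0)

namespace IsNAPrice

variable {r : SignedMeasure ℝ≥0 → SignedMeasure ℝ≥0 → Prop} {π : SignedMeasure ℝ≥0 → ℝ}
  {γ γ₁ γ₂ : SignedMeasure ℝ≥0}

theorem price_eq_of_rel (hπ : IsNAPrice r π) {b : ℝ} (h : r γ (b • uzcb 0)) : π γ = b := by
  have hR := hπ.isMarket.isAddCongr
  have hdiff : r 0 ((b - π γ) • uzcb 0) := by
    rw [← hR.mem_ker, show (b - π γ) • uzcb 0 = b • uzcb 0 - π γ • uzcb 0 by module]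
    exact hR.rel_iff_sub_mem_ker.1 (hR.trans (hR.symm (hπ.rel_price γ)) h)
  linarith [hπ.noArb.eq_zero_of_rel_smul_uzcb hπ.isMarket hdiff]

theorem rel_iff (hπ : IsNAPrice r π) : r γ₁ γ₂ ↔ π γ₁ = π γ₂ := by
  have hR := hπ.isMarket.isAddCongr
  refine ⟨fun h => hπ.price_eq_of_rel (hR.trans h (hπ.rel_price γ₂)), fun h => ?_⟩
  exact hR.trans (hπ.rel_price γ₁) (h ▸ hR.symm (hπ.rel_price γ₂))

theorem price_smul_uzcb (hπ : IsNAPrice r π) (c : ℝ) : π (c • uzcb 0) = c :=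
  hπ.price_eq_of_rel (hπ.isMarket.isAddCongr.refl _)

theorem price_zero (hπ : IsNAPrice r π) : π 0 = 0 := by
  simpa using hπ.price_smul_uzcb 0

theorem price_add (hπ : IsNAPrice r π) (γ₁ γ₂ : SignedMeasure ℝ≥0) :
    π (γ₁ + γ₂) = π γ₁ + π γ₂ :=
  hπ.price_eq_of_rel <| by
    simpa [add_smul] using hπ.isMarket.isAddCongr.add (hπ.rel_price γ₁) (hπ.rel_price γ₂)

theorem price_pos (hπ : IsNAPrice r π) (h₀ : 0 ≤ γ) (hγ : γ ≠ 0) : 0 < π γ := by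
  obtain ⟨b, hb, hrel⟩ := hπ.isMarket.2.2.2 γ h₀ hγ
  rwa [hπ.price_eq_of_rel hrel]

theorem price_nonneg (hπ : IsNAPrice r π) (h₀ : 0 ≤ γ) : 0 ≤ π γ := by
  rcases eq_or_ne γ 0 with rfl | hγ
  · exact hπ.price_zero.ge
  · exact (hπ.price_pos h₀ hγ).le

end IsNAPrice

noncomputable def cashPair : ℝ × ℝ →ₗ[ℝ] SignedMeasure ℝ≥0 × SignedMeasure ℝ≥0 :=
  (LinearMap.toSpanSingleton ℝ _ (uzcb 0)).prodMap (LinearMap.toSpanSingleton ℝ _ (uzcb 0))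

theorem cashPair_apply (v : ℝ × ℝ) : cashPair v = (v.1 • uzcb 0, v.2 • uzcb 0) := rfl

theorem cashPair_eq_zero_iff {v : ℝ × ℝ} : cashPair v = 0 ↔ v = 0 := by
  simp [cashPair_apply, Prod.ext_iff, uzcb_ne_zero]

theorem cashPair_nonneg {v : ℝ × ℝ} (hv : 0 ≤ v) : 0 ≤ (cashPair v).1 ∧ 0 ≤ (cashPair v).2 :=
  ⟨smul_uzcb_nonneg hv.1 0, smul_uzcb_nonneg hv.2 0⟩

theorem mk_uzcb_zero_eq_cashPair :
    ((uzcb 0, 0) : SignedMeasure ℝ≥0 × SignedMeasure ℝ≥0) = cashPair (1, 0) := by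
  simp [cashPair_apply]

theorem smul_uzcb_fst (b : ℝ) :
    b • ((uzcb 0, 0) : SignedMeasure ℝ≥0 × SignedMeasure ℝ≥0) = cashPair (b, 0) := by
  simp [cashPair_apply]

theorem smul_uzcb_snd (b : ℝ) : b • ((0 : SignedMeasure ℝ≥0), uzcb 0) = cashPair (0, b) := by
  simp [cashPair_apply]

namespace IsCombinedMarket

variable {R : SignedMeasure ℝ≥0 × SignedMeasure ℝ≥0 → SignedMeasure ℝ≥0 × SignedMeasure ℝ≥0 → Prop}
  {E : ℝ}

theorem mul_fst_add_snd_eq_zero (hC : IsCombinedMarket R) (hNA : NoArbC R) (hE : 0 < E)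
    (hFX : R (uzcb 0, 0) (E • ((0 : SignedMeasure ℝ≥0), uzcb 0))) {v : ℝ × ℝ}
    (hv : R 0 (cashPair v)) : E * v.1 + v.2 = 0 := by
  refine AddSubgroup.mul_fst_add_snd_eq_zero
    (G := hC.isAddCongr.ker.comap cashPair.toAddMonoidHom) hE ?_ ?_ hv
  · rw [mk_uzcb_zero_eq_cashPair, smul_uzcb_snd, hC.isAddCongr.rel_iff_sub_mem_ker, ← map_sub] at hFX
    simpa using hFX
  · intro w hw hw₀
    by_contra hne
    exact hNA ⟨cashPair w, (cashPair_nonneg hw₀).1, (cashPair_nonneg hw₀).2,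
      cashPair_eq_zero_iff.not.2 hne, hw⟩

theorem rel_zero_cashPair (hC : IsCombinedMarket R) (hNA : NoArbC R) (hE : 0 < E)
    (hFX : R (uzcb 0, 0) (E • ((0 : SignedMeasure ℝ≥0), uzcb 0))) {v : ℝ × ℝ}
    (hv : E * v.1 + v.2 = 0) : R 0 (cashPair v) := by
  set G := hC.isAddCongr.ker.comap cashPair.toAddMonoidHom
  -- Additivity only yields integer multiples of the FX trade; arbitrary amounts are converted
  -- through the 1-price that the market axioms grant to `(o, t • δ₀)`.
  have hsnd_pos : ∀ t > 0, (E⁻¹ * t, -t) ∈ G := by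
    intro t ht
    have h₀ : (0 : ℝ × ℝ) ≤ (0, t) := ⟨le_rfl, ht.le⟩
    obtain ⟨b, -, hb⟩ := hC.2.2.2 (cashPair (0, t)) (cashPair_nonneg h₀).1
      (cashPair_nonneg h₀).2 (cashPair_eq_zero_iff.not.2 (by simp [ht.ne']))
    rw [smul_uzcb_fst, hC.isAddCongr.rel_iff_sub_mem_ker, ← map_sub] at hb
    have hbt := hC.mul_fst_add_snd_eq_zero hNA hE hFX hb
    have hb_eq : b = E⁻¹ * t := by
      simp only [Prod.fst_sub, Prod.snd_sub, sub_zero, zero_sub] at hbt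
      field_simp
      linarith
    show cashPair _ ∈ hC.isAddCongr.ker
    simpa [hb_eq] using hb
  obtain ⟨x, y⟩ := v
  obtain rfl : x = E⁻¹ * -y := by
    field_simp
    linarith
  show (_, _) ∈ G
  rcases lt_trichotomy y 0 with hneg | rfl | hpos
  · simpa using hsnd_pos (-y) (neg_pos.2 hneg)
  · simpa only [neg_zero, mul_zero, Prod.mk_zero_zero] using zero_mem G
  · simpa [mul_neg] using neg_mem (hsnd_pos y hpos)

theorem rel_cashPair_iff (hC : IsCombinedMarket R) (hNA : NoArbC R) (hE : 0 < E)
    (hFX : R (uzcb 0, 0) (E • ((0 : SignedMeasure ℝ≥0), uzcb 0))) {v w : ℝ × ℝ} :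
    R (cashPair v) (cashPair w) ↔ E * v.1 + v.2 = E * w.1 + w.2 := by
  rw [hC.isAddCongr.rel_iff_sub_mem_ker, ← map_sub]
  constructor
  · intro h
    have := hC.mul_fst_add_snd_eq_zero hNA hE hFX h
    simp only [Prod.fst_sub, Prod.snd_sub] at this
    linarith
  · intro h
    exact hC.rel_zero_cashPair hNA hE hFX (by simp only [Prod.fst_sub, Prod.snd_sub]; linarith)

end IsCombinedMarket

def IsCombinedExtension (rE rD : SignedMeasure ℝ≥0 → SignedMeasure ℝ≥0 → Prop) (E : ℝ)
    (R : SignedMeasure ℝ≥0 × SignedMeasure ℝ≥0 → SignedMeasure ℝ≥0 × SignedMeasure ℝ≥0 → Prop) :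
    Prop :=
  IsCombinedMarket R ∧ NoArbC R ∧
    (∀ γ₁ γ₂ : SignedMeasure ℝ≥0, (R (γ₁, 0) (γ₂, 0) ↔ rE γ₁ γ₂)) ∧
    (∀ γ₁ γ₂ : SignedMeasure ℝ≥0, (R (0, γ₁) (0, γ₂) ↔ rD γ₁ γ₂)) ∧
    R (uzcb 0, 0) (E • (((0 : SignedMeasure ℝ≥0), uzcb 0)))

/-- The 2-price of `p` when one unit of the first currency costs `E` units of the second. -/
def combinedPrice (πE πD : SignedMeasure ℝ≥0 → ℝ) (E : ℝ)
    (p : SignedMeasure ℝ≥0 × SignedMeasure ℝ≥0) : ℝ :=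
  E * πE p.1 + πD p.2

section CombinedPrice

variable {rE rD : SignedMeasure ℝ≥0 → SignedMeasure ℝ≥0 → Prop} {πE πD : SignedMeasure ℝ≥0 → ℝ}
  {E : ℝ}

theorem IsCombinedExtension.rel_iff
    {R : SignedMeasure ℝ≥0 × SignedMeasure ℝ≥0 → SignedMeasure ℝ≥0 × SignedMeasure ℝ≥0 → Prop}
    (hR : IsCombinedExtension rE rD E R) (hE : 0 < E)
    (hπE : ∀ γ, rE γ (πE γ • uzcb 0)) (hπD : ∀ γ, rD γ (πD γ • uzcb 0))
    {p q : SignedMeasure ℝ≥0 × SignedMeasure ℝ≥0} :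
    R p q ↔ combinedPrice πE πD E p = combinedPrice πE πD E q := by
  obtain ⟨hC, hNA, hRE, hRD, hFX⟩ := hR
  have hcash : ∀ p, R p (cashPair (πE p.1, πD p.2)) := fun p => by
    simpa [cashPair_apply] using hC.isAddCongr.add ((hRE _ _).2 (hπE p.1)) ((hRD _ _).2 (hπD p.2))
  rw [hC.isAddCongr.rel_congr (hcash p) (hcash q), hC.rel_cashPair_iff hNA hE hFX]
  rfl

theorem combinedPrice_add (hπE : IsNAPrice rE πE) (hπD : IsNAPrice rD πD)
    (p q : SignedMeasure ℝ≥0 × SignedMeasure ℝ≥0) :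
    combinedPrice πE πD E (p + q) = combinedPrice πE πD E p + combinedPrice πE πD E q := by
  simp only [combinedPrice, Prod.fst_add, Prod.snd_add, hπE.price_add, hπD.price_add]
  ring

theorem combinedPrice_cashPair (hπE : IsNAPrice rE πE) (hπD : IsNAPrice rD πD) (v : ℝ × ℝ) :
    combinedPrice πE πD E (cashPair v) = E * v.1 + v.2 := by
  simp only [combinedPrice, cashPair_apply, hπE.price_smul_uzcb, hπD.price_smul_uzcb]

theorem combinedPrice_pos (hπE : IsNAPrice rE πE) (hπD : IsNAPrice rD πD) (hE : 0 < E)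
    {p : SignedMeasure ℝ≥0 × SignedMeasure ℝ≥0} (h₁ : 0 ≤ p.1) (h₂ : 0 ≤ p.2) (hp : p ≠ 0) :
    0 < combinedPrice πE πD E p := by
  have hE₁ := hπE.price_nonneg h₁
  have hD₂ := hπD.price_nonneg h₂
  rcases eq_or_ne p.1 0 with hp₁ | hp₁
  · have hp₂ : p.2 ≠ 0 := fun hp₂ => hp (Prod.ext hp₁ hp₂)
    have := hπD.price_pos h₂ hp₂
    unfold combinedPrice
    positivity
  · have := hπE.price_pos h₁ hp₁
    unfold combinedPrice
    positivity

theorem isCombinedExtension_combinedPrice (hπE : IsNAPrice rE πE) (hπD : IsNAPrice rD πD)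
    (hE : 0 < E) :
    IsCombinedExtension rE rD E (fun p q => combinedPrice πE πD E p = combinedPrice πE πD E q) := by
  have hzero : combinedPrice πE πD E 0 = 0 := by
    simpa using combinedPrice_cashPair (E := E) hπE hπD 0
  refine ⟨⟨fun _ => rfl, fun _ _ => Eq.symm, fun _ _ _ _ h₁ h₂ => ?_, fun p h₁ h₂ hp => ?_⟩,
    ?_, fun γ₁ γ₂ => ?_, fun γ₁ γ₂ => ?_, ?_⟩
  · dsimp only at h₁ h₂ ⊢
    rw [combinedPrice_add hπE hπD, combinedPrice_add hπE hπD, h₁, h₂]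
  · have hpos := combinedPrice_pos hπE hπD hE h₁ h₂ hp
    refine ⟨E⁻¹ * combinedPrice πE πD E p, by positivity, ?_⟩
    dsimp only
    rw [smul_uzcb_fst, combinedPrice_cashPair hπE hπD]
    field_simp
    ring
  · rintro ⟨p, h₁, h₂, hp, h⟩
    exact (combinedPrice_pos hπE hπD hE h₁ h₂ hp).ne' (h.symm.trans hzero)
  · simp [combinedPrice, hπE.rel_iff, hπD.price_zero, hE.ne']
  · simp [combinedPrice, hπD.rel_iff, hπE.price_zero]
  · dsimp only
    rw [mk_uzcb_zero_eq_cashPair, smul_uzcb_snd, combinedPrice_cashPair hπE hπD,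
      combinedPrice_cashPair hπE hπD]
    simp

end CombinedPrice

/-- NA price in combined markets. Given arbitrage-free € and $ markets and a
spot FX rate EURUSD₀ > 0, there is exactly one arbitrage-free combined market extending
both and exchanging (δ₀, o) for EURUSD₀·(o, δ₀); in it, the unique 1-price of (γ_€, γ_$)
is π_€(γ_€) + USDEUR₀·π_$(γ_$) and the unique 2-price is EURUSD₀·π_€(γ_€) + π_$(γ_$). -/
theorem combined_market_NA_price
    (rE rD : SignedMeasure ℝ≥0 → SignedMeasure ℝ≥0 → Prop)
    (hME : IsMarket rE) (hNAE : NoArb rE)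
    (hMD : IsMarket rD) (hNAD : NoArb rD)
    (πE πD : SignedMeasure ℝ≥0 → ℝ)
    (hπE : ∀ γ : SignedMeasure ℝ≥0, rE γ (πE γ • uzcb 0))
    (hπD : ∀ γ : SignedMeasure ℝ≥0, rD γ (πD γ • uzcb 0))
    (EURUSD₀ : ℝ) (hFX : 0 < EURUSD₀)
    (USDEUR₀ : ℝ) (hUSDEUR₀ : USDEUR₀ = 1 / EURUSD₀) :
    (∃! R : SignedMeasure ℝ≥0 × SignedMeasure ℝ≥0 →
            SignedMeasure ℝ≥0 × SignedMeasure ℝ≥0 → Prop,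
      IsCombinedMarket R ∧ NoArbC R ∧
      (∀ γ₁ γ₂ : SignedMeasure ℝ≥0,
        (R (γ₁, 0) (γ₂, 0) ↔ rE γ₁ γ₂)) ∧
      (∀ γ₁ γ₂ : SignedMeasure ℝ≥0,
        (R (0, γ₁) (0, γ₂) ↔ rD γ₁ γ₂)) ∧
      R (uzcb 0, 0) (EURUSD₀ • (((0 : SignedMeasure ℝ≥0), uzcb 0)))) ∧
    (∀ R : SignedMeasure ℝ≥0 × SignedMeasure ℝ≥0 →
           SignedMeasure ℝ≥0 × SignedMeasure ℝ≥0 → Prop,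
      (IsCombinedMarket R ∧ NoArbC R ∧
        (∀ γ₁ γ₂ : SignedMeasure ℝ≥0, (R (γ₁, 0) (γ₂, 0) ↔ rE γ₁ γ₂)) ∧
        (∀ γ₁ γ₂ : SignedMeasure ℝ≥0, (R (0, γ₁) (0, γ₂) ↔ rD γ₁ γ₂)) ∧
        R (uzcb 0, 0) (EURUSD₀ • (((0 : SignedMeasure ℝ≥0), uzcb 0)))) →
      ∀ γE γD : SignedMeasure ℝ≥0,
        (∀ b : ℝ, R (γE, γD) (b • ((uzcb 0, 0) :
            SignedMeasure ℝ≥0 × SignedMeasure ℝ≥0)) ↔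
          b = πE γE + USDEUR₀ * πD γD) ∧
        (∀ b : ℝ, R (γE, γD) (b • (((0 : SignedMeasure ℝ≥0), uzcb 0))) ↔
          b = EURUSD₀ * πE γE + πD γD)) := by
  have hNAPriceE : IsNAPrice rE πE := ⟨hME, hNAE, hπE⟩
  have hNAPriceD : IsNAPrice rD πD := ⟨hMD, hNAD, hπD⟩
  have rel_iff (R) (hR : IsCombinedExtension rE rD EURUSD₀ R) {p q} :
      R p q ↔ combinedPrice πE πD EURUSD₀ p = combinedPrice πE πD EURUSD₀ q :=
    hR.rel_iff hFX hπE hπD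
  refine ⟨⟨_, isCombinedExtension_combinedPrice hNAPriceE hNAPriceD hFX, fun R hR => ?_⟩,
    fun R hR γE γD => ⟨fun b => ?_, fun b => ?_⟩⟩
  · funext p q
    exact propext (rel_iff R hR)
  · rw [rel_iff R hR, smul_uzcb_fst, combinedPrice_cashPair hNAPriceE hNAPriceD,
      hUSDEUR₀, combinedPrice]
    field_simp
    constructor <;> intro h <;> linarith
  · rw [rel_iff R hR, smul_uzcb_snd, combinedPrice_cashPair hNAPriceE hNAPriceD,
      combinedPrice]
    simp [eq_comm]
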